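/- arXiv:2402.10779 — 3 statements merged into one kernel-verified Lean document; each statement's English description precedes it below -/
import Mathlib

section
/- (Path Coverage.) For every edge (u,v) of G that is contained in some walk from s to t of length at most k in G, there exists a walk from s to t of length at most k in the condensed transition graph G*_k that contains the edge (u,v). Thus every edge of every s–t walk of length at most k in G lies on an s–t walk of length at most k in G*_k. -/
open SimpleGraph


lemma split_at_dart {V : Type*} {G : SimpleGraph V} {s t u v : V} (w : G.Walk s t)
    (h : ∃ d ∈ w.darts, d.toProd = (u, v)) :
    ∃ (p : G.Walk s u) (q : G.Walk v t), p.length + 1 + q.length = w.length := by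
  induction w with
  | nil => simp at h
  | @cons a b c hadj p ih =>
    obtain ⟨d, hd, hdp⟩ := h
    rw [SimpleGraph.Walk.darts_cons, List.mem_cons] at hd
    rcases hd with hd | hd
    · subst hd
      simp only [Prod.mk.injEq] at hdp
      obtain ⟨h1, h2⟩ := hdp
      subst h1; subst h2
      exact ⟨SimpleGraph.Walk.nil, p, by simp only [SimpleGraph.Walk.length_nil, SimpleGraph.Walk.length_cons]; omega⟩
    · obtain ⟨p', q', hpq⟩ := ih ⟨d, hd, hdp⟩
      exact ⟨SimpleGraph.Walk.cons hadj p', q', by simp [SimpleGraph.Walk.length_cons]; omega⟩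


/-- A walk `w` contains the edge `(u, v)` if some step (dart) of `w` goes from `u` to `v`. -/
def ContainsEdge {V : Type*} (G : SimpleGraph V) {s t : V} (w : G.Walk s t) (u v : V) : Prop :=
  ∃ d ∈ w.darts, d.toProd = (u, v)

/-- The edge set of the condensed transition graph `G*_k`: the union, over all edges `(u, v)` of
`G` contained in some `s`–`t` walk of length at most `k` in `G`, of the edges of the fixed
shortest walk `σ u : s → u`, the edge `(u, v)` itself, and the edges of the fixed shortest walk
`τ v : v → t`. -/
def condensedEdgeSet {V : Type*} (G : SimpleGraph V) (s t : V) (k : ℕ)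
    (σ : ∀ w : V, G.Reachable s w → G.Walk s w)
    (τ : ∀ w : V, G.Reachable w t → G.Walk w t) : Set (Sym2 V) :=
  {e | ∃ u v, G.Adj u v ∧ (∃ w : G.Walk s t, w.length ≤ k ∧ ContainsEdge G w u v) ∧
    (e = s(u, v) ∨ (∃ hu : G.Reachable s u, e ∈ (σ u hu).edges) ∨
      (∃ hv : G.Reachable v t, e ∈ (τ v hv).edges))}

/-- The condensed transition graph `G*_k`. -/
def condensedGraph {V : Type*} (G : SimpleGraph V) (s t : V) (k : ℕ)
    (σ : ∀ w : V, G.Reachable s w → G.Walk s w)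
    (τ : ∀ w : V, G.Reachable w t → G.Walk w t) : SimpleGraph V :=
  SimpleGraph.fromEdgeSet (condensedEdgeSet G s t k σ τ)

/-- Path Coverage: for every edge `(u, v)` of `G` contained in some `s`–`t` walk of
length at most `k` in `G`, there is an `s`–`t` walk of length at most `k` in the condensed
transition graph `G*_k` that contains the edge `(u, v)`. -/
theorem path_coverage {V : Type*} (G : SimpleGraph V) (s t : V) (k : ℕ)
    (σ : ∀ w : V, G.Reachable s w → G.Walk s w)
    (hσ : ∀ (w : V) (h : G.Reachable s w), (σ w h).length = G.dist s w)
    (τ : ∀ w : V, G.Reachable w t → G.Walk w t)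
    (hτ : ∀ (w : V) (h : G.Reachable w t), (τ w h).length = G.dist w t)
    (u v : V) (huv : G.Adj u v)
    (hex : ∃ w : G.Walk s t, w.length ≤ k ∧ ContainsEdge G w u v) :
    ∃ w' : (condensedGraph G s t k σ τ).Walk s t,
      w'.length ≤ k ∧ ContainsEdge (condensedGraph G s t k σ τ) w' u v := by
  classical
  obtain ⟨w, hwk, hce⟩ := hex
  obtain ⟨p, q, hpq⟩ := split_at_dart w hce
  have hu : G.Reachable s u := ⟨p⟩
  have hv : G.Reachable v t := ⟨q⟩
  have hdsu : G.dist s u ≤ p.length := SimpleGraph.dist_le p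
  have hdvt : G.dist v t ≤ q.length := SimpleGraph.dist_le q
  have hmem : ∀ e, (e = s(u, v) ∨ (∃ hu : G.Reachable s u, e ∈ (σ u hu).edges) ∨
      (∃ hv : G.Reachable v t, e ∈ (τ v hv).edges)) → e ∈ condensedEdgeSet G s t k σ τ :=
    fun e he => ⟨u, v, huv, ⟨w, hwk, hce⟩, he⟩
  have hσedge : ∀ e ∈ (σ u hu).edges, e ∈ (condensedGraph G s t k σ τ).edgeSet := by
    intro e he
    rw [condensedGraph, edgeSet_fromEdgeSet]
    refine ⟨hmem e (Or.inr (Or.inl ⟨hu, he⟩)), ?_⟩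
    exact G.not_isDiag_of_mem_edgeSet ((σ u hu).edges_subset_edgeSet he)
  have hτedge : ∀ e ∈ (τ v hv).edges, e ∈ (condensedGraph G s t k σ τ).edgeSet := by
    intro e he
    rw [condensedGraph, edgeSet_fromEdgeSet]
    refine ⟨hmem e (Or.inr (Or.inr ⟨hv, he⟩)), ?_⟩
    exact G.not_isDiag_of_mem_edgeSet ((τ v hv).edges_subset_edgeSet he)
  have hadj' : (condensedGraph G s t k σ τ).Adj u v := by
    rw [condensedGraph, fromEdgeSet_adj]
    exact ⟨hmem _ (Or.inl rfl), huv.ne⟩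
  refine ⟨((σ u hu).transfer _ hσedge).append
    (SimpleGraph.Walk.cons hadj' ((τ v hv).transfer _ hτedge)), ?_, ?_⟩
  · simp only [SimpleGraph.Walk.length_append, SimpleGraph.Walk.length_cons,
      SimpleGraph.Walk.length_transfer, hσ, hτ]
    omega
  · refine ⟨⟨(u, v), hadj'⟩, ?_, rfl⟩
    simp [SimpleGraph.Walk.darts_append, SimpleGraph.Walk.darts_cons]
end

section
/- Suppose s ≠ t, s is connected to t in G, and dist_G(s,t) ≤ k. Then s and t are connected in the condensed transition graph G*_k and dist_{G*_k}(s,t) = dist_G(s,t); i.e., the condensed transition graph preserves the s–t distance. -/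
open SimpleGraph

/-!
A shortest `s`–`t` walk of `G` has length `dist_G(s, t) ≤ k`, so each of its edges is one of the
edges `(u, v)` of the defining union and lies in `G*_k`. As `G*_k ≤ G`, that walk is also shortest
in `G*_k`.
-/

namespace SimpleGraph

variable {V : Type*} {G H : SimpleGraph V} {u v : V}

theorem Walk.reachable_and_dist_eq_of_edges_subset (hHG : H ≤ G) (p : G.Walk u v)
    (hp : p.length = G.dist u v) (hpH : ∀ e ∈ p.edges, e ∈ H.edgeSet) :
    H.Reachable u v ∧ H.dist u v = G.dist u v := by
  let q := p.transfer H hpH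
  have hq : q.length = G.dist u v := (p.length_transfer hpH).trans hp
  exact ⟨⟨q⟩, le_antisymm (hq ▸ dist_le q) (Reachable.dist_anti hHG ⟨q⟩)⟩

variable (G) {s t : V} {k : ℕ}
  {σ : ∀ w : V, G.Reachable s w → G.Walk s w} {τ : ∀ w : V, G.Reachable w t → G.Walk w t}

theorem condensedEdgeSet_subset_edgeSet : condensedEdgeSet G s t k σ τ ⊆ G.edgeSet := by
  rintro e ⟨u, v, huv, -, rfl | ⟨_, he⟩ | ⟨_, he⟩⟩
  · exact huv
  · exact (σ u _).edges_subset_edgeSet he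
  · exact (τ v _).edges_subset_edgeSet he

theorem condensedGraph_le : condensedGraph G s t k σ τ ≤ G :=
  (G.fromEdgeSet_le).2 (Set.sdiff_subset.trans (condensedEdgeSet_subset_edgeSet G))

theorem Walk.edges_subset_condensedGraph_edgeSet (p : G.Walk s t) (hp : p.length ≤ k) :
    ∀ e ∈ p.edges, e ∈ (condensedGraph G s t k σ τ).edgeSet := by
  intro e he
  obtain ⟨d, hd, rfl⟩ := List.mem_map.mp he
  rw [condensedGraph, edgeSet_fromEdgeSet]
  exact ⟨⟨d.fst, d.snd, d.adj, ⟨p, hp, d, hd, rfl⟩, Or.inl rfl⟩,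
    G.not_isDiag_of_mem_edgeSet (p.edges_subset_edgeSet he)⟩

end SimpleGraph

theorem condensed_preserves_dist_general {V : Type*} (G : SimpleGraph V) (s t : V) (k : ℕ)
    (hreach : G.Reachable s t) (hdist : G.dist s t ≤ k)
    (σ : ∀ w : V, G.Reachable s w → G.Walk s w)
    (τ : ∀ w : V, G.Reachable w t → G.Walk w t) :
    (condensedGraph G s t k σ τ).Reachable s t ∧
      (condensedGraph G s t k σ τ).dist s t = G.dist s t := by
  obtain ⟨p, hp⟩ := hreach.exists_walk_length_eq_dist
  exact p.reachable_and_dist_eq_of_edges_subset (condensedGraph_le G) hp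
    (p.edges_subset_condensedGraph_edgeSet G (hp ▸ hdist))

/-- if `s ≠ t`, `s` is connected to `t` in `G`, and `dist_G s t ≤ k`, then `s` and
`t` are connected in the condensed transition graph `G*_k` and the `s`–`t` distance in `G*_k`
equals the `s`–`t` distance in `G`. -/
theorem condensed_preserves_dist {V : Type*} (G : SimpleGraph V) (s t : V) (k : ℕ)
    (hst : s ≠ t) (hreach : G.Reachable s t) (hdist : G.dist s t ≤ k)
    (σ : ∀ w : V, G.Reachable s w → G.Walk s w)
    (hσ : ∀ (w : V) (h : G.Reachable s w), (σ w h).length = G.dist s w)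
    (τ : ∀ w : V, G.Reachable w t → G.Walk w t)
    (hτ : ∀ (w : V) (h : G.Reachable w t), (τ w h).length = G.dist w t) :
    (condensedGraph G s t k σ τ).Reachable s t ∧
      (condensedGraph G s t k σ τ).dist s t = G.dist s t :=
  condensed_preserves_dist_general G s t k hreach hdist σ τ
end

section
/- Let V be finite with |V| = n vertices, and suppose for each vertex v connected to s a shortest walk σ(v) from s to v with length(σ(v)) ≤ k is fixed. Then the union over such v of the edge sets of the walks σ(v) has cardinality at most k·n. Consequently, if G has m edges, the edge set of the condensed transition graph G*_k has cardinality at most m + 2·k·n. -/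
/-!
Each fixed walk has at most `k` edges and there is at most one per vertex, so the edges of all the
`σ`-walks, and likewise of all the `τ`-walks, number at most `k * n`. Every edge of `G*_k` is an
edge of `G` or lies on one of these walks.
-/

open SimpleGraph

namespace SimpleGraph

variable {V : Type*} {G : SimpleGraph V}

theorem Walk.ncard_setOf_mem_edges_le {u v : V} (p : G.Walk u v) :
    {e | e ∈ p.edges}.ncard ≤ p.length := by
  classical
  rw [← List.coe_toFinset, Set.ncard_coe_finset, ← p.length_edges]
  exact List.toFinset_card_le _

theorem ncard_iUnion_walk_edges_le {ι : Type*} [Fintype ι] {P : ι → Prop} {x y : ι → V}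
    (w : ∀ i, P i → G.Walk (x i) (y i)) {k : ℕ} (hw : ∀ i h, (w i h).length ≤ k) :
    (⋃ (i : ι) (h : P i), {e | e ∈ (w i h).edges}).ncard ≤ k * Fintype.card ι := by
  have hunion : (⋃ (i : ι) (h : P i), {e | e ∈ (w i h).edges}) =
      ⋃ i ∈ Finset.univ, ⋃ (h : P i), {e | e ∈ (w i h).edges} := by
    simp only [Finset.mem_univ, Set.iUnion_true]
  have hterm (i : ι) : (⋃ (h : P i), {e | e ∈ (w i h).edges}).ncard ≤ k := by
    by_cases h : P i
    · rw [show (⋃ (h : P i), {e | e ∈ (w i h).edges}) = {e | e ∈ (w i h).edges} from iSup_pos h]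
      exact (w i h).ncard_setOf_mem_edges_le.trans (hw i h)
    · simp [h]
  calc _ ≤ ∑ i, (⋃ (h : P i), {e | e ∈ (w i h).edges}).ncard :=
        hunion ▸ Finset.set_ncard_biUnion_le _ _
    _ ≤ ∑ _i : ι, k := Finset.sum_le_sum fun i _ => hterm i
    _ = k * Fintype.card ι := by rw [Finset.sum_const, Finset.card_univ, smul_eq_mul, mul_comm]

end SimpleGraph

theorem condensedEdgeSet_subset {V : Type*} (G : SimpleGraph V) (s t : V) (k : ℕ)
    (σ : ∀ w : V, G.Reachable s w → G.Walk s w) (τ : ∀ w : V, G.Reachable w t → G.Walk w t) :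
    condensedEdgeSet G s t k σ τ ⊆ G.edgeSet ∪
      ((⋃ (v : V) (h : G.Reachable s v), {e | e ∈ (σ v h).edges}) ∪
        ⋃ (v : V) (h : G.Reachable v t), {e | e ∈ (τ v h).edges}) := by
  rintro e ⟨u, v, hadj, -, rfl | ⟨hu, he⟩ | ⟨hv, he⟩⟩
  · exact Or.inl hadj
  · exact Or.inr (Or.inl (Set.mem_iUnion.2 ⟨u, Set.mem_iUnion.2 ⟨hu, he⟩⟩))
  · exact Or.inr (Or.inr (Set.mem_iUnion.2 ⟨v, Set.mem_iUnion.2 ⟨hv, he⟩⟩))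

theorem condensed_edgeSet_card_bound_general {V : Type*} [Fintype V] (G : SimpleGraph V)
    (s t : V) (k n m : ℕ) (hn : Fintype.card V = n) (hm : G.edgeSet.ncard = m)
    (σ : ∀ w : V, G.Reachable s w → G.Walk s w)
    (hσk : ∀ (w : V) (h : G.Reachable s w), (σ w h).length ≤ k)
    (τ : ∀ w : V, G.Reachable w t → G.Walk w t)
    (hτk : ∀ (w : V) (h : G.Reachable w t), (τ w h).length ≤ k) :
    (⋃ (v : V) (h : G.Reachable s v), {e | e ∈ (σ v h).edges}).ncard ≤ k * n ∧
      (condensedEdgeSet G s t k σ τ).ncard ≤ m + 2 * k * n := by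
  subst hn hm
  set A := ⋃ (v : V) (h : G.Reachable s v), {e | e ∈ (σ v h).edges}
  set B := ⋃ (v : V) (h : G.Reachable v t), {e | e ∈ (τ v h).edges}
  have hA : A.ncard ≤ k * Fintype.card V := ncard_iUnion_walk_edges_le (x := fun _ => s) σ hσk
  have hB : B.ncard ≤ k * Fintype.card V := ncard_iUnion_walk_edges_le (y := fun _ => t) τ hτk
  refine ⟨hA, ?_⟩
  calc (condensedEdgeSet G s t k σ τ).ncard
      ≤ (G.edgeSet ∪ (A ∪ B)).ncard :=
        Set.ncard_le_ncard (condensedEdgeSet_subset G s t k σ τ) (Set.toFinite _)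
    _ ≤ G.edgeSet.ncard + (A.ncard + B.ncard) :=
        (Set.ncard_union_le _ _).trans (Nat.add_le_add_left (Set.ncard_union_le _ _) _)
    _ ≤ G.edgeSet.ncard + 2 * k * Fintype.card V := by lia

/-- with `|V| = n` and fixed shortest walks `σ v : s → v` of length at most `k`
(and likewise `τ v : v → t`), the union over `v` of the edge sets of the walks `σ v` has at most
`k * n` elements; consequently, if `G` has `m` edges, the edge set of the condensed transition
graph `G*_k` has at most `m + 2 * k * n` elements. -/
theorem condensed_edgeSet_card_bound {V : Type*} [Fintype V] (G : SimpleGraph V)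
    (s t : V) (k n m : ℕ) (hn : Fintype.card V = n) (hm : G.edgeSet.ncard = m)
    (σ : ∀ w : V, G.Reachable s w → G.Walk s w)
    (hσ : ∀ (w : V) (h : G.Reachable s w), (σ w h).length = G.dist s w)
    (hσk : ∀ (w : V) (h : G.Reachable s w), (σ w h).length ≤ k)
    (τ : ∀ w : V, G.Reachable w t → G.Walk w t)
    (hτ : ∀ (w : V) (h : G.Reachable w t), (τ w h).length = G.dist w t)
    (hτk : ∀ (w : V) (h : G.Reachable w t), (τ w h).length ≤ k) :
    (⋃ (v : V) (h : G.Reachable s v), {e | e ∈ (σ v h).edges}).ncard ≤ k * n ∧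
      (condensedEdgeSet G s t k σ τ).ncard ≤ m + 2 * k * n :=
  condensed_edgeSet_card_bound_general G s t k n m hn hm σ hσk τ hτk
end
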